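/- arXiv:2407.17326 — 6 statements merged into one kernel-verified Lean document; each statement's English description precedes it below -/
import Mathlib

section
/- Define b_n = (1,1,3,3,2) · Mⁿ · (1,0,0,0,0)ᵀ, where M is the 5×5 matrix with rows (1,0,0,0,1), (1,0,0,0,0), (0,0,0,1,0), (0,0,0,1,1), (0,1,1,0,0), and let a_n be the coefficients of the power series expansion of 2(1+x²)/((1-x)(1-x-2x³)). Then a_n = b_{n+1} for all n ≥ 0. -/
open Matrix PowerSeries

theorem stmt_3
    (M : Matrix (Fin 5) (Fin 5) ℚ)
    (hM : M = !![1,0,0,0,1; 1,0,0,0,0; 0,0,0,1,0; 0,0,0,1,1; 0,1,1,0,0])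
    (b : ℕ → ℚ)
    (hb : ∀ n, b n = ![1,1,3,3,2] ⬝ᵥ (M ^ n).mulVec ![1,0,0,0,0])
    (a : ℕ → ℚ)
    (ha : (PowerSeries.mk a) * ((1 - X) * (1 - X - 2 * X^3))
        = (2 : PowerSeries ℚ) * (1 + X^2)) :
    ∀ n, a n = b (n + 1) := by
  -- rewrite the power series product
  have h2C : C (2:ℚ) = (2 : PowerSeries ℚ) := map_ofNat C 2
  have hprod : (PowerSeries.mk a) * ((1 - X) * (1 - X - 2 * X^3))
      = PowerSeries.mk a + X^2 * PowerSeries.mk a + C (2:ℚ) * (X^4 * PowerSeries.mk a)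
        - (C (2:ℚ) * (X^1 * PowerSeries.mk a) + C (2:ℚ) * (X^3 * PowerSeries.mk a)) := by
    rw [h2C]; ring
  have hrhs : (2 : PowerSeries ℚ) * (1 + X^2) = C (2:ℚ) + C (2:ℚ) * X^2 := by
    rw [h2C]; ring
  have hc : ∀ n : ℕ, a n
      + (if 2 ≤ n then a (n - 2) else 0)
      + 2 * (if 4 ≤ n then a (n - 4) else 0)
      - (2 * (if 1 ≤ n then a (n - 1) else 0) + 2 * (if 3 ≤ n then a (n - 3) else 0))
      = (if n = 0 then 2 else 0) + 2 * (if n = 2 then (1:ℚ) else 0) := by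
    intro n
    have := congrArg (coeff n) (hprod.symm.trans (ha.trans hrhs))
    simp only [map_add, map_sub, PowerSeries.coeff_C_mul,
      PowerSeries.coeff_X_pow_mul', PowerSeries.coeff_mk, PowerSeries.coeff_C,
      PowerSeries.coeff_X_pow] at this
    convert this using 2 <;> norm_num
  -- initial values of a
  have ha0 : a 0 = 2 := by have := hc 0; norm_num at this; linarith
  have ha1 : a 1 = 4 := by have := hc 1; norm_num [ha0] at this; linarith
  have ha2 : a 2 = 8 := by have := hc 2; norm_num [ha0, ha1] at this; linarith
  have ha3 : a 3 = 16 := by have := hc 3; norm_num [ha0, ha1, ha2] at this; linarith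
  have harec : ∀ n : ℕ, a (n + 4) = 2 * a (n + 3) - a (n + 2) + 2 * a (n + 1) - 2 * a n := by
    intro n
    have := hc (n + 4)
    have h1 : n + 4 - 1 = n + 3 := by omega
    have h2 : n + 4 - 2 = n + 2 := by omega
    have h3 : n + 4 - 3 = n + 1 := by omega
    have h4 : n + 4 - 4 = n := by omega
    simp only [h1, h2, h3, h4, if_pos (by omega : 1 ≤ n + 4), if_pos (by omega : 2 ≤ n + 4),
      if_pos (by omega : 3 ≤ n + 4), if_pos (by omega : 4 ≤ n + 4),
      if_neg (by omega : ¬ n + 4 = 0), if_neg (by omega : ¬ n + 4 = 2)] at this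
    linarith
  -- b side: explicit row vectors c_k = w * M^k
  have hc1 : vecMul (![1,1,3,3,2] : Fin 5 → ℚ) (M ^ 1) = ![2,2,2,6,4] := by
    rw [pow_one, hM]; ext j; fin_cases j <;>
      simp [Matrix.vecMul, dotProduct, Fin.sum_univ_succ] <;> norm_num
  have step : ∀ (v w : Fin 5 → ℚ) (k : ℕ), vecMul v (M ^ k) = w →
      vecMul v (M ^ (k + 1)) = vecMul w M := by
    intro v w k h
    rw [pow_succ, ← Matrix.vecMul_vecMul, h]
  have hstep : ∀ w : Fin 5 → ℚ, vecMul w M =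
      ![w 0 + w 1, w 4, w 4, w 2 + w 3, w 0 + w 3] := by
    intro w
    rw [hM]; ext j; fin_cases j <;>
      simp [Matrix.vecMul, dotProduct, Fin.sum_univ_succ] <;>
      (try norm_num) <;> (try (apply congrArg; decide))
  have hc2 : vecMul (![1,1,3,3,2] : Fin 5 → ℚ) (M ^ 2) = ![4,4,4,8,8] := by
    rw [step _ _ 1 hc1, hstep]; norm_num <;> simp <;> norm_num
  have hc3 : vecMul (![1,1,3,3,2] : Fin 5 → ℚ) (M ^ 3) = ![8,8,8,12,12] := by
    rw [step _ _ 2 hc2, hstep]; norm_num <;> simp <;> norm_num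
  have hc4 : vecMul (![1,1,3,3,2] : Fin 5 → ℚ) (M ^ 4) = ![16,12,12,20,20] := by
    rw [step _ _ 3 hc3, hstep]; norm_num <;> simp <;> norm_num
  have hc5 : vecMul (![1,1,3,3,2] : Fin 5 → ℚ) (M ^ 5) = ![28,20,20,32,36] := by
    rw [step _ _ 4 hc4, hstep]; norm_num <;> simp <;> norm_num
  -- expansion of b (n + k) for k ≥ 1
  have expand : ∀ (n k : ℕ) (w : Fin 5 → ℚ),
      vecMul (![1,1,3,3,2] : Fin 5 → ℚ) (M ^ k) = w →
      b (n + k) = vecMul w (M ^ n) ⬝ᵥ ![1,0,0,0,0] := by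
    intro n k w h
    rw [hb, show n + k = k + n from by omega, pow_add, ← h,
      dotProduct_mulVec, Matrix.vecMul_vecMul]
  -- initial values of b
  have hbval : ∀ (k : ℕ) (w : Fin 5 → ℚ),
      vecMul (![1,1,3,3,2] : Fin 5 → ℚ) (M ^ k) = w → b k = w 0 := by
    intro k w h
    have := expand 0 k w h
    rw [show (0 + k : ℕ) = k from by omega] at this
    rw [this, pow_zero]
    simp [Matrix.vecMul_one, dotProduct, Fin.sum_univ_succ]
  have hb1 : b 1 = 2 := by rw [hbval 1 _ hc1]; norm_num
  have hb2 : b 2 = 4 := by rw [hbval 2 _ hc2]; norm_num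
  have hb3 : b 3 = 8 := by rw [hbval 3 _ hc3]; norm_num
  have hb4 : b 4 = 16 := by rw [hbval 4 _ hc4]; norm_num
  -- recurrence for b
  have hbrec : ∀ n : ℕ,
      b (n + 5) = 2 * b (n + 4) - b (n + 3) + 2 * b (n + 2) - 2 * b (n + 1) := by
    intro n
    rw [expand n 5 _ hc5, expand n 4 _ hc4, expand n 3 _ hc3,
      expand n 2 _ hc2, expand n 1 _ hc1]
    have key : ∀ v : Fin 5 → ℚ,
        (![28,20,20,32,36] : Fin 5 → ℚ) ⬝ᵥ v
        = 2 * ((![16,12,12,20,20] : Fin 5 → ℚ) ⬝ᵥ v)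
          - (![8,8,8,12,12] : Fin 5 → ℚ) ⬝ᵥ v
          + 2 * ((![4,4,4,8,8] : Fin 5 → ℚ) ⬝ᵥ v)
          - 2 * ((![2,2,2,6,4] : Fin 5 → ℚ) ⬝ᵥ v) := by
      intro v
      simp [dotProduct, Fin.sum_univ_succ]
      ring
    rw [← dotProduct_mulVec, ← dotProduct_mulVec, ← dotProduct_mulVec,
      ← dotProduct_mulVec, ← dotProduct_mulVec]
    exact key _
  -- strong induction
  intro n
  induction n using Nat.strong_induction_on with
  | _ n ih =>
    match n with
    | 0 => rw [ha0, hb1]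
    | 1 => rw [ha1, hb2]
    | 2 => rw [ha2, hb3]
    | 3 => rw [ha3, hb4]
    | (m + 4) =>
      have i0 := ih m (by omega)
      have i1 := ih (m + 1) (by omega)
      have i2 := ih (m + 2) (by omega)
      have i3 := ih (m + 3) (by omega)
      rw [harec m, i0, i1, i2, i3, show m + 4 + 1 = m + 5 from by omega, hbrec m]
      try ring_nf
      try rw [show m + 1 + 1 = m + 2 from by omega, show m + 2 + 1 = m + 3 from by omega,
        show m + 3 + 1 = m + 4 from by omega]
      try ring
end

section
/- Define a_n = (1,1,1,1,1) · Mⁿ · (0,0,1,0,0)ᵀ, where M is the 5×5 matrix with rows (1,0,0,0,1), (1,0,0,0,0), (0,0,0,1,0), (0,0,0,1,1), (0,1,1,0,0). Then a_0 = 1, a_1 = 1, a_2 = 2, and a_n = a_{n-1} + 2a_{n-3} for all n ≥ 3. -/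
open Matrix

theorem stmt_4
    (M : Matrix (Fin 5) (Fin 5) ℕ)
    (hM : M = !![1,0,0,0,1; 1,0,0,0,0; 0,0,0,1,0; 0,0,0,1,1; 0,1,1,0,0])
    (a : ℕ → ℕ)
    (ha : ∀ n, a n = ![1,1,1,1,1] ⬝ᵥ (M ^ n).mulVec ![0,0,1,0,0]) :
    a 0 = 1 ∧ a 1 = 1 ∧ a 2 = 2 ∧
    ∀ n, 3 ≤ n → a n = a (n-1) + 2 * a (n-3) := by
  subst hM
  have key : ∀ x : Fin 5 → ℕ,
      ![1,1,1,1,1] ⬝ᵥ ((!![1,0,0,0,1; 1,0,0,0,0; 0,0,0,1,0; 0,0,0,1,1; 0,1,1,0,0] : Matrix (Fin 5) (Fin 5) ℕ) ^ 3).mulVec x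
      = ![1,1,1,1,1] ⬝ᵥ ((!![1,0,0,0,1; 1,0,0,0,0; 0,0,0,1,0; 0,0,0,1,1; 0,1,1,0,0] : Matrix (Fin 5) (Fin 5) ℕ) ^ 2).mulVec x
        + 2 * (![1,1,1,1,1] ⬝ᵥ x) := by
    intro x
    simp [pow_succ, pow_zero, Matrix.mulVec, Matrix.mul_apply, dotProduct,
      Fin.sum_univ_five, Matrix.vecHead, Matrix.vecTail]
    ring
  refine ⟨?_, ?_, ?_, ?_⟩
  · rw [ha]; decide
  · rw [ha]; decide
  · rw [ha]; decide
  · intro n hn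
    obtain ⟨k, rfl⟩ : ∃ k, n = k + 3 := ⟨n - 3, by omega⟩
    rw [ha, ha, ha]
    have h1 : k + 3 - 1 = 2 + k := by omega
    have h3 : k + 3 - 3 = k := by omega
    rw [h1, h3, show k + 3 = 3 + k by omega, pow_add, pow_add,
      ← Matrix.mulVec_mulVec, ← Matrix.mulVec_mulVec]
    exact key _
end

section
/- Define a_n = (1,1,1,1,1)·Mⁿ·(0,0,1,0,0)ᵀ for the 5×5 matrix M with rows (1,0,0,0,1), (1,0,0,0,0), (0,0,0,1,0), (0,0,0,1,1), (0,1,1,0,0), and let b_n be the coefficients of the power series x(1+x²)/(1-x-2x³). Then a_n = b_{n+1} for all n ≥ 0. -/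
open Matrix PowerSeries

theorem stmt_9
    (M : Matrix (Fin 5) (Fin 5) ℚ)
    (hM : M = !![1,0,0,0,1; 1,0,0,0,0; 0,0,0,1,0; 0,0,0,1,1; 0,1,1,0,0])
    (a : ℕ → ℚ)
    (ha : ∀ n, a n = ![1,1,1,1,1] ⬝ᵥ (M ^ n).mulVec ![0,0,1,0,0])
    (b : ℕ → ℚ)
    (hb : X * (1 + X^2)
        = (1 - X - 2 * X^3) *
            PowerSeries.mk (fun n => if n = 0 then 0 else b n)) :
    ∀ n : ℕ, a n = b (n + 1) := by
  set c : ℕ → ℚ := fun n => if n = 0 then 0 else b n with hc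
  have hcoeff : ∀ n, coeff n (X + X^3) =
      coeff n (PowerSeries.mk c) - coeff n (X * PowerSeries.mk c)
      - 2 * coeff n (X^3 * PowerSeries.mk c) := by
    intro n
    have h1 : X * (1 + X^2) = (X + X^3 : ℚ⟦X⟧) := by ring
    have h2 : (1 - X - 2 * X^3) * PowerSeries.mk c
        = PowerSeries.mk c - X * PowerSeries.mk c - 2 * (X^3 * PowerSeries.mk c) := by ring
    have h2mul : ∀ f : ℚ⟦X⟧, coeff n (2 * f) = 2 * coeff n f := by
      intro f
      rw [two_mul, map_add, two_mul]
    have := congrArg (coeff n) hb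
    rw [h1, h2] at this
    rw [map_sub, map_sub, h2mul] at this
    exact this
  have hXc : ∀ n : ℕ, coeff (n+1) (X * PowerSeries.mk c) = c n := by
    intro n; rw [coeff_succ_X_mul, coeff_mk]
  have hX3c : ∀ d : ℕ, coeff d (X^3 * PowerSeries.mk c) =
      if 3 ≤ d then c (d - 3) else 0 := by
    intro d; rw [coeff_X_pow_mul']; split_ifs with h <;> simp [coeff_mk]
  have hb1 : b 1 = 1 := by
    have := hcoeff 1
    rw [hXc 0, hX3c] at this
    simp [coeff_X, coeff_X_pow, hc] at this
    linarith
  have hb2 : b 2 = 1 := by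
    have := hcoeff 2
    rw [hXc 1, hX3c] at this
    simp [coeff_X, coeff_X_pow, hc, hb1] at this
    linarith
  have hb3 : b 3 = 2 := by
    have := hcoeff 3
    rw [hXc 2, hX3c] at this
    simp [coeff_X, coeff_X_pow, hc, hb2] at this
    linarith
  have hbrec : ∀ n : ℕ, b (n + 4) = b (n + 3) + 2 * b (n + 1) := by
    intro n
    have := hcoeff (n + 4)
    rw [show n + 4 = (n + 3) + 1 from rfl, hXc (n+3), hX3c] at this
    have h3 : 3 ≤ n + 3 + 1 := by omega
    rw [if_pos h3, show n + 3 + 1 - 3 = n + 1 from rfl] at this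
    have hne1 : ¬ (n + 3 + 1 = 1) := by omega
    have hne3 : ¬ (n + 3 + 1 = 3) := by omega
    simp only [map_add, coeff_X, coeff_X_pow, coeff_mk, hc, if_neg hne1, if_neg hne3,
      if_neg (by omega : ¬ (n + 3 + 1 = 0)), if_neg (by omega : ¬ (n + 1 = 0)),
      if_neg (by omega : ¬ (n + 3 = 0))] at this
    linarith
  -- a side
  have ha0 : a 0 = 1 := by
    rw [ha]; simp [Matrix.mulVec, dotProduct, Fin.sum_univ_five]
  have ha1 : a 1 = 1 := by
    rw [ha, pow_one, hM]
    simp [Matrix.mulVec, dotProduct, Fin.sum_univ_five]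
  have ha2 : a 2 = 2 := by
    rw [ha, sq, hM]
    simp [Matrix.mulVec, dotProduct, Matrix.mul_apply, Fin.sum_univ_five]
    norm_num
  have harec : ∀ n : ℕ, a (n + 3) = a (n + 2) + 2 * a n := by
    intro n
    have hv3 : Matrix.vecMul (![1,1,1,1,1] : Fin 5 → ℚ) (M^3) = ![5,4,4,5,6] := by
      rw [hM, pow_succ, pow_succ, pow_one]
      funext j
      fin_cases j <;>
        simp [Matrix.vecMul, dotProduct, Matrix.mul_apply, Fin.sum_univ_five,
          Matrix.vecHead, Matrix.vecTail] <;> norm_num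
    have hv2 : Matrix.vecMul (![1,1,1,1,1] : Fin 5 → ℚ) (M^2) = ![3,2,2,3,4] := by
      rw [hM, sq]
      funext j
      fin_cases j <;>
        simp [Matrix.vecMul, dotProduct, Matrix.mul_apply, Fin.sum_univ_five,
          Matrix.vecHead, Matrix.vecTail] <;> norm_num
    have key : ∀ k m : ℕ, a (m + k) =
        Matrix.vecMul (Matrix.vecMul (![1,1,1,1,1] : Fin 5 → ℚ) (M^k)) (M^m) ⬝ᵥ ![0,0,1,0,0] := by
      intro k m
      rw [ha, Matrix.dotProduct_mulVec, show m + k = k + m from add_comm m k, pow_add,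
        ← Matrix.vecMul_vecMul]
    have e3 := key 3 n
    have e2 := key 2 n
    have e0 := key 0 n
    rw [hv3] at e3
    rw [hv2] at e2
    rw [pow_zero, Matrix.vecMul_one] at e0
    rw [Nat.add_zero] at e0
    rw [e3, e2, e0]
    have hsum : (![5,4,4,5,6] : Fin 5 → ℚ) = ![3,2,2,3,4] + (2:ℚ) • ![1,1,1,1,1] := by
      funext j; fin_cases j <;> norm_num
    rw [hsum, Matrix.add_vecMul, Matrix.smul_vecMul, add_dotProduct,
      smul_dotProduct, smul_eq_mul]
  have main : ∀ n : ℕ, a n = b (n+1) ∧ a (n+1) = b (n+2) ∧ a (n+2) = b (n+3) := by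
    intro n
    induction n with
    | zero => exact ⟨by rw [ha0, hb1], by rw [ha1, hb2], by rw [ha2, hb3]⟩
    | succ k ih =>
      refine ⟨ih.2.1, ih.2.2, ?_⟩
      rw [show k + 1 + 2 = k + 3 from rfl, harec k, ih.2.2, ih.1,
        show k + 1 + 3 = k + 4 from rfl, hbrec k]
  exact fun n => (main n).1
end

section
/- Let S_n denote the set of binary strings of length n in which every maximal run of zeros has length not congruent to 1 modulo 3, and let c_n = |S_n|. Then c_1 = 1, c_2 = 2, c_3 = 4, and c_n = c_{n-1} + 2c_{n-3} for all n ≥ 4. -/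
/-- A binary string (`false` = 0, `true` = 1) in which every maximal run of
zeros has length not congruent to 1 modulo 3.  The maximal runs of zeros are
exactly the nonempty chunks obtained by splitting the list at the ones. -/
def GoodString (l : List Bool) : Prop :=
  ∀ r ∈ l.splitOn true, r.length % 3 ≠ 1

/-- `c n` = number of binary strings of length `n` with no maximal run of
zeros of length ≡ 1 (mod 3). -/
noncomputable def goodStringCount (n : ℕ) : ℕ :=
  Nat.card {l : List Bool // l.length = n ∧ GoodString l}

instance : DecidablePred GoodString := fun l => by
  unfold GoodString; infer_instance

lemma splitOn_true_true (l : List Bool) :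
    (true :: l).splitOn true = [] :: l.splitOn true := by
  simp [List.splitOn, List.splitOnP_cons]

lemma splitOn_true_false (l : List Bool) :
    (false :: l).splitOn true = (l.splitOn true).modifyHead (List.cons false) := by
  simp [List.splitOn, List.splitOnP_cons]

lemma good_true_cons (l : List Bool) : GoodString (true :: l) ↔ GoodString l := by
  unfold GoodString
  rw [splitOn_true_true]
  simp

lemma bad_01 (l : List Bool) : ¬ GoodString (false :: true :: l) := by
  intro h
  have := h [false] (by rw [splitOn_true_false, splitOn_true_true]; simp)
  simp at this

lemma good_001 (l : List Bool) :
    GoodString (false :: false :: true :: l) ↔ GoodString l := by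
  unfold GoodString
  rw [splitOn_true_false, splitOn_true_false, splitOn_true_true]
  simp

lemma good_000 (l : List Bool) :
    GoodString (false :: false :: false :: l) ↔ GoodString l := by
  obtain ⟨h, t, heq⟩ : ∃ h t, l.splitOn true = h :: t := by
    cases hs : l.splitOn true with
    | nil => exact absurd hs (List.splitOnP_ne_nil _ l)
    | cons a b => exact ⟨a, b, rfl⟩
  unfold GoodString
  rw [splitOn_true_false, splitOn_true_false, splitOn_true_false, heq]
  simp only [List.modifyHead_cons, List.mem_cons, forall_eq_or_imp, List.length_cons]
  constructor
  · rintro ⟨h1, h2⟩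
    exact ⟨by omega, h2⟩
  · rintro ⟨h1, h2⟩
    exact ⟨by omega, h2⟩

lemma good_shape {l : List Bool} (hg : GoodString l) (hl : 3 ≤ l.length) :
    (∃ t, l = true :: t) ∨ (∃ t, l = false :: false :: true :: t) ∨
      (∃ t, l = false :: false :: false :: t) := by
  match l with
  | [] => simp at hl
  | true :: t => exact Or.inl ⟨t, rfl⟩
  | [false] => simp at hl
  | false :: true :: t => exact absurd hg (bad_01 t)
  | [false, false] => simp at hl
  | false :: false :: true :: t => exact Or.inr (Or.inl ⟨t, rfl⟩)
  | false :: false :: false :: t => exact Or.inr (Or.inr ⟨t, rfl⟩)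

instance gsFinite (n : ℕ) : Finite {l : List Bool // l.length = n ∧ GoodString l} := by
  have h : {l : List Bool | l.length = n ∧ GoodString l}.Finite :=
    (List.finite_length_eq Bool n).subset (fun l hl => hl.1)
  exact h.to_subtype

lemma gsc_rec (n : ℕ) :
    goodStringCount (n + 3) = goodStringCount (n + 2) + 2 * goodStringCount n := by
  set A := {l : List Bool // l.length = n + 3 ∧ GoodString l}
  set B := {l : List Bool // l.length = n + 2 ∧ GoodString l}
  set C := {l : List Bool // l.length = n ∧ GoodString l}
  have key : Nat.card (B ⊕ C ⊕ C) = Nat.card A := by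
    apply Nat.card_eq_of_bijective
      (f := fun x => match x with
        | .inl ⟨t, ht, hgt⟩ =>
            (⟨true :: t, by simp [ht], (good_true_cons t).2 hgt⟩ : A)
        | .inr (.inl ⟨t, ht, hgt⟩) =>
            (⟨false :: false :: true :: t, by simp [ht], (good_001 t).2 hgt⟩ : A)
        | .inr (.inr ⟨t, ht, hgt⟩) =>
            (⟨false :: false :: false :: t, by simp [ht], (good_000 t).2 hgt⟩ : A))
    constructor
    · rintro (⟨t, ht, hgt⟩ | ⟨t, ht, hgt⟩ | ⟨t, ht, hgt⟩)
        (⟨s, hs, hgs⟩ | ⟨s, hs, hgs⟩ | ⟨s, hs, hgs⟩) h <;>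
        all_goals
          have h' := congrArg Subtype.val h
          simp only [List.cons.injEq] at h'
          simp_all
          try exact Subtype.ext h'
    · rintro ⟨l, hl, hg⟩
      rcases good_shape hg (by omega) with ⟨t, rfl⟩ | ⟨t, rfl⟩ | ⟨t, rfl⟩
      · exact ⟨.inl ⟨t, by simpa using hl, (good_true_cons t).1 hg⟩, rfl⟩
      · exact ⟨.inr (.inl ⟨t, by simpa using hl, (good_001 t).1 hg⟩), rfl⟩
      · exact ⟨.inr (.inr ⟨t, by simpa using hl, (good_000 t).1 hg⟩), rfl⟩
  have : goodStringCount (n + 3) = Nat.card B + (Nat.card C + Nat.card C) := by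
    rw [goodStringCount, ← key, Nat.card_sum, Nat.card_sum]
  rw [this]
  show _ = Nat.card B + 2 * Nat.card C
  omega

lemma gsc_set (n : ℕ) :
    goodStringCount n = {l : List Bool | l.length = n ∧ GoodString l}.ncard := by
  rw [goodStringCount]
  exact Nat.card_coe_set_eq {l : List Bool | l.length = n ∧ GoodString l}

lemma gsc0 : goodStringCount 0 = 1 := by
  rw [gsc_set]
  have : {l : List Bool | l.length = 0 ∧ GoodString l} = {([] : List Bool)} := by
    ext l
    constructor
    · rintro ⟨hl, -⟩
      simpa using List.length_eq_zero_iff.1 hl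
    · rintro rfl
      exact ⟨rfl, by decide⟩
  rw [this, Set.ncard_singleton]

lemma gsc1 : goodStringCount 1 = 1 := by
  rw [gsc_set]
  have : {l : List Bool | l.length = 1 ∧ GoodString l} = {[true]} := by
    ext l
    constructor
    · rintro ⟨hl, hg⟩
      obtain ⟨a, rfl⟩ := List.length_eq_one_iff.1 hl
      cases a
      · exact absurd hg (by decide)
      · rfl
    · rintro rfl
      exact ⟨rfl, by decide⟩
  rw [this, Set.ncard_singleton]

lemma gsc2 : goodStringCount 2 = 2 := by
  rw [gsc_set]
  have : {l : List Bool | l.length = 2 ∧ GoodString l} = {[true, true], [false, false]} := by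
    ext l
    constructor
    · rintro ⟨hl, hg⟩
      match l, hl with
      | [a, b], _ =>
        cases a <;> cases b <;> first
          | exact absurd hg (by decide)
          | simp
    · rintro (rfl | rfl) <;> exact ⟨rfl, by decide⟩
  rw [this, Set.ncard_pair (by simp)]

theorem stmt_10 :
    goodStringCount 1 = 1 ∧ goodStringCount 2 = 2 ∧ goodStringCount 3 = 4 ∧
    ∀ n, 4 ≤ n →
      goodStringCount n = goodStringCount (n-1) + 2 * goodStringCount (n-3) := by
  have h3 : goodStringCount 3 = 4 := by
    have := gsc_rec 0
    rw [gsc0, gsc2] at this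
    simpa using this
  refine ⟨gsc1, gsc2, h3, fun n hn => ?_⟩
  obtain ⟨m, rfl⟩ : ∃ m, n = m + 3 := ⟨n - 3, by omega⟩
  have := gsc_rec m
  simpa using this
end

section
/- Let N be the 5×5 matrix with rows (0,1,0,0,0), (0,0,1,0,1), (1,0,0,0,0), (0,1,0,0,0), (0,0,1,1,1) (columns/rows indexed by the string-types A,B,C,D,E), and let S_n be the set of binary strings of length n with no maximal zero-run of length ≡ 1 mod 3. Then |S_n| = (1,1,1,1,1)·N^{n-1}·(0,0,1,0,0)ᵀ for all n ≥ 1. -/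
open Matrix

namespace Stmt12Aux

/-- leading zero-run length -/
def lead (l : List Bool) : ℕ := ((l.splitOn true).headI).length

/-- all zero-runs except the leading one are fine -/
def TG (l : List Bool) : Prop := ∀ r ∈ (l.splitOn true).tail, r.length % 3 ≠ 1

lemma splitOn_cons_true (l : List Bool) :
    (true :: l).splitOn true = [] :: l.splitOn true := by
  simp [List.splitOn, List.splitOnP_cons]

lemma splitOn_cons_false (l : List Bool) :
    (false :: l).splitOn true = (l.splitOn true).modifyHead (List.cons false) := by
  simp [List.splitOn, List.splitOnP_cons]

lemma splitOn_eq (l : List Bool) :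
    l.splitOn true = (l.splitOn true).headI :: (l.splitOn true).tail := by
  rcases h : l.splitOn true with _ | ⟨a, t⟩
  · exact absurd h (List.splitOnP_ne_nil _ l)
  · rfl

lemma good_iff (l : List Bool) : GoodString l ↔ TG l ∧ lead l % 3 ≠ 1 := by
  unfold GoodString TG lead
  conv_lhs => rw [splitOn_eq l]
  rw [List.forall_mem_cons]
  tauto

lemma lead_cons_true (l : List Bool) : lead (true :: l) = 0 := by
  simp [lead, splitOn_cons_true]

lemma TG_cons_true (l : List Bool) : TG (true :: l) ↔ GoodString l := by
  unfold TG GoodString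
  rw [splitOn_cons_true, List.tail_cons]

lemma lead_cons_false (l : List Bool) : lead (false :: l) = lead l + 1 := by
  unfold lead
  rw [splitOn_cons_false, splitOn_eq l]
  simp

lemma TG_cons_false (l : List Bool) : TG (false :: l) ↔ TG l := by
  unfold TG
  rw [splitOn_cons_false, splitOn_eq l]
  simp

/-- strings of length n, tail-good, leading run ≡ i mod 3 -/
def Q (i n : ℕ) : Set (List Bool) := {l | l.length = n ∧ TG l ∧ lead l % 3 = i}

/-- good strings of length n -/
def G (n : ℕ) : Set (List Bool) := {l | l.length = n ∧ GoodString l}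

lemma Q_finite (i n : ℕ) : (Q i n).Finite :=
  (List.finite_length_eq Bool n).subset fun _ h => h.1

lemma G_finite (n : ℕ) : (G n).Finite :=
  (List.finite_length_eq Bool n).subset fun _ h => h.1

noncomputable def p (i n : ℕ) : ℕ := (Q i n).ncard

lemma G_eq (n : ℕ) : G n = Q 0 n ∪ Q 2 n := by
  ext l
  simp only [G, Q, Set.mem_setOf_eq, Set.mem_union, good_iff]
  constructor
  · rintro ⟨h1, h2, h3⟩
    have h4 : lead l % 3 = 0 ∨ lead l % 3 = 2 := by omega
    rcases h4 with h4 | h4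
    · exact Or.inl ⟨h1, h2, h4⟩
    · exact Or.inr ⟨h1, h2, h4⟩
  · rintro (⟨h1, h2, h3⟩ | ⟨h1, h2, h3⟩) <;> exact ⟨h1, h2, by omega⟩

lemma Q1_succ (n : ℕ) : Q 1 (n + 1) = (List.cons false) '' Q 0 n := by
  ext l
  constructor
  · rintro ⟨h1, h2, h3⟩
    rcases l with _ | ⟨b, t⟩
    · simp at h1
    cases b
    · refine ⟨t, ⟨by simpa using h1, (TG_cons_false t).1 h2, ?_⟩, rfl⟩
      rw [lead_cons_false] at h3; omega
    · rw [lead_cons_true] at h3; simp at h3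
  · rintro ⟨t, ⟨h1, h2, h3⟩, rfl⟩
    exact ⟨by simp [h1], (TG_cons_false t).2 h2, by rw [lead_cons_false]; omega⟩

lemma Q2_succ (n : ℕ) : Q 2 (n + 1) = (List.cons false) '' Q 1 n := by
  ext l
  constructor
  · rintro ⟨h1, h2, h3⟩
    rcases l with _ | ⟨b, t⟩
    · simp at h1
    cases b
    · refine ⟨t, ⟨by simpa using h1, (TG_cons_false t).1 h2, ?_⟩, rfl⟩
      rw [lead_cons_false] at h3; omega
    · rw [lead_cons_true] at h3; simp at h3
  · rintro ⟨t, ⟨h1, h2, h3⟩, rfl⟩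
    exact ⟨by simp [h1], (TG_cons_false t).2 h2, by rw [lead_cons_false]; omega⟩

lemma Q0_succ (n : ℕ) :
    Q 0 (n + 1) = (List.cons true) '' G n ∪ (List.cons false) '' Q 2 n := by
  ext l
  constructor
  · rintro ⟨h1, h2, h3⟩
    rcases l with _ | ⟨b, t⟩
    · simp at h1
    cases b
    · right
      refine ⟨t, ⟨by simpa using h1, (TG_cons_false t).1 h2, ?_⟩, rfl⟩
      rw [lead_cons_false] at h3; omega
    · left
      exact ⟨t, ⟨by simpa using h1, (TG_cons_true t).1 h2⟩, rfl⟩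
  · rintro (⟨t, ⟨h1, h2⟩, rfl⟩ | ⟨t, ⟨h1, h2, h3⟩, rfl⟩)
    · exact ⟨by simp [h1], (TG_cons_true t).2 h2, by rw [lead_cons_true]⟩
    · exact ⟨by simp [h1], (TG_cons_false t).2 h2, by rw [lead_cons_false]; omega⟩

lemma p1_succ (n : ℕ) : p 1 (n + 1) = p 0 n := by
  rw [p, Q1_succ, Set.ncard_image_of_injective _ List.cons_injective]; rfl

lemma p2_succ (n : ℕ) : p 2 (n + 1) = p 1 n := by
  rw [p, Q2_succ, Set.ncard_image_of_injective _ List.cons_injective]; rfl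

lemma gcount_eq (n : ℕ) : (G n).ncard = p 0 n + p 2 n := by
  rw [G_eq, Set.ncard_union_eq ?_ (Q_finite 0 n) (Q_finite 2 n)]
  · rfl
  · rw [Set.disjoint_left]
    rintro l ⟨_, _, h0⟩ ⟨_, _, h2⟩
    omega

lemma p0_succ (n : ℕ) : p 0 (n + 1) = p 0 n + p 2 n + p 2 n := by
  rw [p, Q0_succ, Set.ncard_union_eq ?_
      ((G_finite n).image _) ((Q_finite 2 n).image _)]
  · rw [Set.ncard_image_of_injective _ List.cons_injective,
      Set.ncard_image_of_injective _ List.cons_injective, gcount_eq]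
    rfl
  · rw [Set.disjoint_left]
    rintro l ⟨t, _, rfl⟩ ⟨t', _, h⟩
    simp at h

lemma p0_zero : p 0 0 = 1 := by
  have : Q 0 0 = {([] : List Bool)} := by
    ext l
    simp only [Q, Set.mem_setOf_eq, List.length_eq_zero_iff, Set.mem_singleton_iff]
    constructor
    · rintro ⟨rfl, -, -⟩; rfl
    · rintro rfl
      refine ⟨rfl, ?_, by simp [lead, List.splitOn]⟩
      intro r hr
      simp [TG, List.splitOn] at hr
  rw [p, this, Set.ncard_singleton]

lemma p1_zero : p 1 0 = 0 := by
  have : Q 1 0 = ∅ := by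
    ext l
    simp only [Q, Set.mem_setOf_eq, List.length_eq_zero_iff, Set.mem_empty_iff_false, iff_false]
    rintro ⟨rfl, -, h⟩
    simp [lead, List.splitOn] at h
  rw [p, this, Set.ncard_empty]

lemma p2_zero : p 2 0 = 0 := by
  have : Q 2 0 = ∅ := by
    ext l
    simp only [Q, Set.mem_setOf_eq, List.length_eq_zero_iff, Set.mem_empty_iff_false, iff_false]
    rintro ⟨rfl, -, h⟩
    simp [lead, List.splitOn] at h
  rw [p, this, Set.ncard_empty]

lemma goodStringCount_eq (n : ℕ) : goodStringCount n = p 0 n + p 2 n := by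
  rw [← gcount_eq, ← Nat.card_coe_set_eq]
  rfl

def myN : Matrix (Fin 5) (Fin 5) ℕ :=
  !![0,1,0,0,0; 0,0,1,0,1; 1,0,0,0,0; 0,1,0,0,0; 0,0,1,1,1]

def W : ℕ → ℕ × ℕ × ℕ × ℕ × ℕ
  | 0 => (0, 0, 1, 0, 0)
  | n + 1 =>
      ((W n).2.1, (W n).2.2.1 + (W n).2.2.2.2, (W n).1, (W n).2.1,
        (W n).2.2.1 + (W n).2.2.2.1 + (W n).2.2.2.2)

def Wv (n : ℕ) : Fin 5 → ℕ :=
  ![(W n).1, (W n).2.1, (W n).2.2.1, (W n).2.2.2.1, (W n).2.2.2.2]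

lemma pow_eq_W (n : ℕ) : (myN ^ n).mulVec ![0,0,1,0,0] = Wv n := by
  induction n with
  | zero =>
    funext i
    fin_cases i <;> simp [Wv, W, Matrix.mulVec, dotProduct, Fin.sum_univ_five]
  | succ n ih =>
    rw [pow_succ', ← Matrix.mulVec_mulVec, ih]
    funext i
    fin_cases i <;>
      simp [Wv, W, myN, Matrix.mulVec, dotProduct, Fin.sum_univ_five]

lemma invariant (n : ℕ) :
    (W n).1 + (W n).2.2.1 + (W n).2.2.2.1 + (W n).2.2.2.2 = p 0 (n + 1) ∧
    (W n).2.1 = p 2 (n + 1) ∧ (W n).2.2.1 + (W n).2.2.2.2 = p 1 (n + 1) := by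
  induction n with
  | zero =>
    refine ⟨?_, ?_, ?_⟩ <;>
      simp [W, p0_succ, p1_succ, p2_succ, p0_zero, p1_zero, p2_zero]
  | succ n ih =>
    obtain ⟨h0, h1, h2⟩ := ih
    rw [p0_succ (n + 1), p1_succ (n + 1), p2_succ (n + 1)]
    refine ⟨?_, ?_, ?_⟩
    · show (W n).2.1 + (W n).1 + (W n).2.1 +
        ((W n).2.2.1 + (W n).2.2.2.1 + (W n).2.2.2.2) = _
      omega
    · show (W n).2.2.1 + (W n).2.2.2.2 = _
      omega
    · show (W n).1 + ((W n).2.2.1 + (W n).2.2.2.1 + (W n).2.2.2.2) = _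
      omega

end Stmt12Aux

theorem stmt_12 :
    let N : Matrix (Fin 5) (Fin 5) ℕ :=
      !![0,1,0,0,0; 0,0,1,0,1; 1,0,0,0,0; 0,1,0,0,0; 0,0,1,1,1]
    ∀ n, 1 ≤ n →
      goodStringCount n = ![1,1,1,1,1] ⬝ᵥ (N ^ (n-1)).mulVec ![0,0,1,0,0] := by
  intro N n hn
  open Stmt12Aux in
  show goodStringCount n = ![1,1,1,1,1] ⬝ᵥ (myN ^ (n-1)).mulVec ![0,0,1,0,0]
  rw [pow_eq_W]
  obtain ⟨h0, h1, h2⟩ := invariant (n - 1)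
  rw [show n - 1 + 1 = n from by omega] at h0 h1
  rw [goodStringCount_eq]
  simp [Wv, dotProduct, Fin.sum_univ_five]
  omega
end

section
/- Let A_n be the set of n×2 arrays with entries in {0,1,2} such that: every 1 is immediately preceded (to the left in its row, or directly above in its column) by a 0; no 0 is immediately preceded (left or above) by a 0; and every 2 at position (i,j) satisfies j ≥ 2 with the entries at (i,j-1) and (i,j-2) being 1 and 0 respectively. Let d_n = |A_n|. Then d_1 = 1, d_2 = 1, d_3 = 2, and d_n = d_{n-1} + 2d_{n-3} for all n ≥ 4. -/
/-- An `n × 2` array over `{0,1,2}` satisfying: every 1 is immediately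
preceded (above in its column or to its left in its row) by a 0; no 0 is
immediately preceded (above or to the left) by a 0; and every 2 is immediately
preceded in its column by 0, 1 in the two rows above. -/
def IsDragonArray {n : ℕ} (m : Fin n → Fin 2 → Fin 3) : Prop :=
  (∀ (i : Fin n) (j : Fin 2), m i j = 1 →
      (1 ≤ i.val ∧
        m ⟨i.val - 1, Nat.lt_of_le_of_lt (Nat.sub_le _ _) i.isLt⟩ j = 0) ∨
      (j = 1 ∧ m i 0 = 0)) ∧
  (∀ (i : Fin n) (j : Fin 2), m i j = 0 →
      (1 ≤ i.val →
        m ⟨i.val - 1, Nat.lt_of_le_of_lt (Nat.sub_le _ _) i.isLt⟩ j ≠ 0) ∧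
      (j = 1 → m i 0 ≠ 0)) ∧
  (∀ (i : Fin n) (j : Fin 2), m i j = 2 →
      2 ≤ i.val ∧
      m ⟨i.val - 1, Nat.lt_of_le_of_lt (Nat.sub_le _ _) i.isLt⟩ j = 1 ∧
      m ⟨i.val - 2, Nat.lt_of_le_of_lt (Nat.sub_le _ _) i.isLt⟩ j = 0)

instance dragonDec {n : ℕ} (m : Fin n → Fin 2 → Fin 3) : Decidable (IsDragonArray m) := by
  unfold IsDragonArray; infer_instance

abbrev DRow := Fin 2 → Fin 3

def dAllowed (p q r : DRow) : Prop :=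
  ∀ j : Fin 2,
    (r j = 1 → q j = 0 ∨ (j = 1 ∧ r 0 = 0)) ∧
    (r j = 0 → q j ≠ 0 ∧ (j = 1 → r 0 ≠ 0)) ∧
    (r j = 2 → q j = 1 ∧ p j = 0)

instance (p q r : DRow) : Decidable (dAllowed p q r) := by unfold dAllowed; infer_instance

-- helpers
lemma snoc_mk_lt {n : ℕ} (m : Fin n → DRow) (r : DRow) (v : ℕ) (h : v < n) (h' : v < n + 1) :
    (Fin.snoc m r : Fin (n+1) → DRow) ⟨v, h'⟩ = m ⟨v, h⟩ := by
  have : (⟨v, h'⟩ : Fin (n+1)) = Fin.castSucc ⟨v, h⟩ := rfl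
  rw [this, Fin.snoc_castSucc]

lemma snoc_mk_last {n : ℕ} (m : Fin n → DRow) (r : DRow) (h' : n < n + 1) :
    (Fin.snoc m r : Fin (n+1) → DRow) ⟨n, h'⟩ = r := by
  have : (⟨n, h'⟩ : Fin (n+1)) = Fin.last n := rfl
  rw [this, Fin.snoc_last]

lemma dragon_init {n : ℕ} (m : Fin (n+1) → DRow) (h : IsDragonArray m) :
    IsDragonArray (Fin.init m) := by
  obtain ⟨h1, h0, h2⟩ := h
  refine ⟨fun i j hj => ?_, fun i j hj => ?_, fun i j hj => ?_⟩
  · exact h1 ⟨i.val, by omega⟩ j hj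
  · exact h0 ⟨i.val, by omega⟩ j hj
  · exact h2 ⟨i.val, by omega⟩ j hj

lemma dragon_last3 {n : ℕ} (m : Fin (n+3) → DRow) (h : IsDragonArray m) :
    dAllowed (m ⟨n, by omega⟩) (m ⟨n+1, by omega⟩) (m ⟨n+2, by omega⟩) := by
  obtain ⟨h1, h0, h2⟩ := h
  intro j
  refine ⟨fun hr => ?_, fun hr => ?_, fun hr => ?_⟩
  · rcases h1 ⟨n+2, by omega⟩ j hr with ⟨_, hc⟩ | hc
    · left; exact hc
    · right; exact hc
  · obtain ⟨ha, hb⟩ := h0 ⟨n+2, by omega⟩ j hr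
    exact ⟨ha (show 1 ≤ n+2 by omega), hb⟩
  · obtain ⟨_, ha, hb⟩ := h2 ⟨n+2, by omega⟩ j hr
    exact ⟨ha, hb⟩

lemma dragon_snoc {n : ℕ} (m : Fin (n+2) → DRow) (r : DRow)
    (h : IsDragonArray m) (ha : dAllowed (m ⟨n, by omega⟩) (m ⟨n+1, by omega⟩) r) :
    IsDragonArray (Fin.snoc m r) := by
  obtain ⟨h1, h0, h2⟩ := h
  refine ⟨fun i j hj => ?_, fun i j hj => ?_, fun i j hj => ?_⟩ <;>
    obtain ⟨iv, hiv⟩ := i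
  · by_cases hi : iv < n + 2
    · rw [snoc_mk_lt m r iv hi] at hj
      rcases h1 ⟨iv, hi⟩ j hj with ⟨hle, hc⟩ | ⟨hje, hc⟩
      · exact Or.inl ⟨hle, by rw [snoc_mk_lt m r _ (by omega)]; exact hc⟩
      · exact Or.inr ⟨hje, by rw [snoc_mk_lt m r iv hi]; exact hc⟩
    · have hi2 : iv = n + 2 := by omega
      subst hi2
      rw [snoc_mk_last] at hj
      rcases ((ha j).1 hj) with hc | ⟨hje, hc⟩
      · refine Or.inl ⟨(by omega : 1 ≤ n+2), ?_⟩
        show (Fin.snoc m r : Fin (n+3) → DRow) ⟨n+1, by omega⟩ j = 0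
        rw [snoc_mk_lt m r (n+1) (by omega)]; exact hc
      · exact Or.inr ⟨hje, by rw [snoc_mk_last]; exact hc⟩
  · by_cases hi : iv < n + 2
    · rw [snoc_mk_lt m r iv hi] at hj
      obtain ⟨ha', hb'⟩ := h0 ⟨iv, hi⟩ j hj
      refine ⟨fun hle => ?_, fun hje => ?_⟩
      · rw [snoc_mk_lt m r _ (by omega)]; exact ha' hle
      · rw [snoc_mk_lt m r iv hi]; exact hb' hje
    · have hi2 : iv = n + 2 := by omega
      subst hi2
      rw [snoc_mk_last] at hj
      obtain ⟨ha', hb'⟩ := (ha j).2.1 hj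
      refine ⟨fun _ => ?_, fun hje => ?_⟩
      · show (Fin.snoc m r : Fin (n+3) → DRow) ⟨n+1, by omega⟩ j ≠ 0
        rw [snoc_mk_lt m r (n+1) (by omega)]; exact ha'
      · rw [snoc_mk_last]; exact hb' hje
  · by_cases hi : iv < n + 2
    · rw [snoc_mk_lt m r iv hi] at hj
      obtain ⟨hle, ha', hb'⟩ := h2 ⟨iv, hi⟩ j hj
      refine ⟨hle, ?_, ?_⟩
      · rw [snoc_mk_lt m r _ (by omega)]; exact ha'
      · rw [snoc_mk_lt m r _ (by omega)]; exact hb'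
    · have hi2 : iv = n + 2 := by omega
      subst hi2
      rw [snoc_mk_last] at hj
      obtain ⟨ha', hb'⟩ := (ha j).2.2 hj
      refine ⟨(by omega : 2 ≤ n+2), ?_, ?_⟩
      · show (Fin.snoc m r : Fin (n+3) → DRow) ⟨n+1, by omega⟩ j = 1
        rw [snoc_mk_lt m r (n+1) (by omega)]; exact ha'
      · show (Fin.snoc m r : Fin (n+3) → DRow) ⟨n, by omega⟩ j = 0
        rw [snoc_mk_lt m r n (by omega)]; exact hb'

lemma snoc_init_eq {n : ℕ} (m : Fin (n+1) → DRow) (r : DRow)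
    (hr : m ⟨n, by omega⟩ = r) : Fin.snoc (Fin.init m) r = m := by
  funext i
  obtain ⟨iv, hiv⟩ := i
  by_cases hlt : iv < n
  · rw [snoc_mk_lt _ _ iv hlt]; rfl
  · have h2 : iv = n := by omega
    subst h2
    rw [snoc_mk_last]
    exact hr.symm

noncomputable def dragonArrayCount (n : ℕ) : ℕ :=
  Nat.card {m : Fin n → Fin 2 → Fin 3 // IsDragonArray m}

def r01 : DRow := ![0, 1]
def r10 : DRow := ![1, 0]

noncomputable def c2 (k : ℕ) (p q : DRow) : ℕ :=
  Nat.card {m : Fin (k+2) → DRow //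
    IsDragonArray m ∧ m ⟨k, by omega⟩ = p ∧ m ⟨k+1, by omega⟩ = q}

def V : ℕ → DRow → DRow → ℕ
  | 0, p, q => if p = r01 ∧ q = r10 then 1 else 0
  | k+1, q, r => ∑ p : DRow, if dAllowed p q r then V k p q else 0

lemma V_succ (k : ℕ) (q r : DRow) :
    V (k+1) q r = ∑ p : DRow, if dAllowed p q r then V k p q else 0 := rfl

lemma card_fiber_partition {α β : Type*} [Fintype α] [Fintype β] [DecidableEq β] (f : α → β) :
    Fintype.card α = ∑ b : β, Fintype.card {a // f a = b} := by
  rw [← Fintype.card_sigma]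
  exact (Fintype.card_congr (Equiv.sigmaFiberEquiv f)).symm

lemma c2_zero (p q : DRow) : c2 0 p q = V 0 p q := by
  have key : ∀ m : Fin 2 → DRow, IsDragonArray m ↔ m = ![r01, r10] := by decide
  show _ = if p = r01 ∧ q = r10 then 1 else 0
  by_cases h : p = r01 ∧ q = r10
  · rw [if_pos h, c2, Nat.card_eq_fintype_card, Fintype.card_eq_one_iff]
    refine ⟨⟨![r01, r10], (key _).mpr rfl, h.1.symm, h.2.symm⟩, ?_⟩
    rintro ⟨m, hm, h0, h1⟩
    exact Subtype.ext ((key m).mp hm)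
  · rw [if_neg h, c2, Nat.card_eq_fintype_card, Fintype.card_eq_zero_iff]
    refine ⟨fun x => ?_⟩
    obtain ⟨m, hm, h0, h1⟩ := x
    have hme := (key m).mp hm
    subst hme
    exact h ⟨h0.symm, h1.symm⟩

lemma c2_succ (k : ℕ) (q r : DRow) :
    c2 (k+1) q r = ∑ p : DRow, if dAllowed p q r then c2 k p q else 0 := by
  rw [c2, Nat.card_eq_fintype_card,
    card_fiber_partition (f := fun x : {m : Fin (k+3) → DRow //
      IsDragonArray m ∧ m ⟨k+1, by omega⟩ = q ∧ m ⟨k+2, by omega⟩ = r} =>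
        x.val ⟨k, by omega⟩)]
  refine Finset.sum_congr rfl fun p _ => ?_
  by_cases h : dAllowed p q r
  · rw [if_pos h, c2, Nat.card_eq_fintype_card]
    refine Fintype.card_congr ?_
    refine
      { toFun := fun x => ⟨Fin.init x.val.val,
          dragon_init _ x.val.prop.1, x.prop, x.val.prop.2.1⟩
        invFun := fun y => ⟨⟨Fin.snoc y.val r,
          dragon_snoc y.val r y.prop.1 (by rw [y.prop.2.1, y.prop.2.2]; exact h),
          by show (Fin.snoc y.val r : Fin (k+3) → DRow) ⟨k+1, by omega⟩ = q
             rw [snoc_mk_lt y.val r (k+1) (by omega)]; exact y.prop.2.2,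
          by show (Fin.snoc y.val r : Fin (k+3) → DRow) ⟨k+2, by omega⟩ = r
             rw [snoc_mk_last]⟩,
          by show (Fin.snoc y.val r : Fin (k+3) → DRow) ⟨k, by omega⟩ = p
             rw [snoc_mk_lt y.val r k (by omega)]; exact y.prop.2.1⟩
        left_inv := fun x => ?_
        right_inv := fun y => ?_ }
    · refine Subtype.ext (Subtype.ext ?_)
      exact snoc_init_eq x.val.val r x.val.prop.2.2
    · refine Subtype.ext ?_
      show Fin.init (Fin.snoc (α := fun _ => DRow) y.val r) = y.val
      exact Fin.init_snoc (α := fun _ => DRow) r y.val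
  · rw [if_neg h]
    rw [Fintype.card_eq_zero_iff]
    refine ⟨fun x => ?_⟩
    obtain ⟨⟨m, hm, hq, hr⟩, hp⟩ := x
    have hp' : m ⟨k, by omega⟩ = p := hp
    refine h ?_
    have := dragon_last3 m hm
    rw [← hp', ← hq, ← hr]
    exact this

lemma c2_eq_V : ∀ (k : ℕ) (p q : DRow), c2 k p q = V k p q := by
  intro k
  induction k with
  | zero => exact c2_zero
  | succ k ih =>
    intro q r
    rw [c2_succ, V_succ]
    refine Finset.sum_congr rfl fun p _ => ?_
    by_cases h : dAllowed p q r <;> simp [h, ih]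

lemma count_eq (k : ℕ) : dragonArrayCount (k+2) = ∑ p : DRow, ∑ q : DRow, V k p q := by
  rw [dragonArrayCount, Nat.card_eq_fintype_card,
    card_fiber_partition (f := fun x : {m : Fin (k+2) → DRow // IsDragonArray m} =>
      (x.val ⟨k, by omega⟩, x.val ⟨k+1, by omega⟩)), Fintype.sum_prod_type]
  refine Finset.sum_congr rfl fun p _ => Finset.sum_congr rfl fun q _ => ?_
  rw [← c2_eq_V, c2, Nat.card_eq_fintype_card]
  refine Fintype.card_congr ?_
  exact
    { toFun := fun x => ⟨x.val.val, x.val.prop,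
        congrArg Prod.fst x.prop, congrArg Prod.snd x.prop⟩
      invFun := fun y => ⟨⟨y.val, y.prop.1⟩, by
        show (_, _) = (p, q)
        rw [Prod.mk.injEq]
        exact ⟨y.prop.2.1, y.prop.2.2⟩⟩
      left_inv := fun x => Subtype.ext (Subtype.ext rfl)
      right_inv := fun y => Subtype.ext rfl }
def tb0 : Fin 3 → Fin 3 → Fin 3 → Fin 3 → ℕ :=
  ![![![![0, 0, 0], ![0, 0, 0], ![0, 0, 0]], ![![0, 0, 0], ![1, 0, 0], ![0, 0, 0]], ![![0, 0, 0], ![0, 0, 0], ![0, 0, 0]]], ![![![0, 0, 0], ![0, 0, 0], ![0, 0, 0]], ![![0, 0, 0], ![0, 0, 0], ![0, 0, 0]], ![![0, 0, 0], ![0, 0, 0], ![0, 0, 0]]], ![![![0, 0, 0], ![0, 0, 0], ![0, 0, 0]], ![![0, 0, 0], ![0, 0, 0], ![0, 0, 0]], ![![0, 0, 0], ![0, 0, 0], ![0, 0, 0]]]]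

def tb1 : Fin 3 → Fin 3 → Fin 3 → Fin 3 → ℕ :=
  ![![![![0, 0, 0], ![0, 0, 0], ![0, 0, 0]], ![![0, 0, 0], ![0, 0, 0], ![0, 0, 0]], ![![0, 0, 0], ![0, 0, 0], ![0, 0, 0]]], ![![![0, 1, 0], ![0, 0, 0], ![0, 1, 0]], ![![0, 0, 0], ![0, 0, 0], ![0, 0, 0]], ![![0, 0, 0], ![0, 0, 0], ![0, 0, 0]]], ![![![0, 0, 0], ![0, 0, 0], ![0, 0, 0]], ![![0, 0, 0], ![0, 0, 0], ![0, 0, 0]], ![![0, 0, 0], ![0, 0, 0], ![0, 0, 0]]]]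

def tb2 : Fin 3 → Fin 3 → Fin 3 → Fin 3 → ℕ :=
  ![![![![0, 0, 0], ![0, 0, 0], ![0, 0, 0]], ![![0, 0, 0], ![1, 0, 1], ![0, 0, 0]], ![![0, 0, 0], ![0, 0, 0], ![0, 0, 0]]], ![![![0, 0, 0], ![0, 0, 0], ![0, 0, 0]], ![![0, 0, 0], ![0, 0, 0], ![0, 0, 0]], ![![0, 0, 0], ![0, 0, 0], ![0, 0, 0]]], ![![![0, 0, 0], ![0, 0, 0], ![0, 0, 0]], ![![0, 1, 1], ![0, 0, 0], ![0, 0, 0]], ![![0, 0, 0], ![0, 0, 0], ![0, 0, 0]]]]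

def tb3 : Fin 3 → Fin 3 → Fin 3 → Fin 3 → ℕ :=
  ![![![![0, 0, 0], ![0, 0, 0], ![0, 0, 0]], ![![0, 0, 0], ![1, 0, 0], ![0, 0, 0]], ![![0, 0, 0], ![1, 0, 0], ![0, 0, 0]]], ![![![0, 1, 0], ![0, 0, 0], ![0, 1, 0]], ![![0, 0, 0], ![0, 0, 0], ![0, 0, 0]], ![![0, 1, 0], ![0, 0, 0], ![1, 0, 0]]], ![![![0, 0, 0], ![0, 0, 0], ![0, 0, 0]], ![![0, 0, 0], ![0, 0, 0], ![0, 0, 0]], ![![0, 0, 0], ![0, 0, 0], ![0, 0, 0]]]]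

def tb4 : Fin 3 → Fin 3 → Fin 3 → Fin 3 → ℕ :=
  ![![![![0, 0, 0], ![0, 0, 0], ![0, 0, 0]], ![![0, 0, 0], ![2, 0, 1], ![0, 0, 0]], ![![0, 0, 0], ![0, 0, 0], ![0, 0, 0]]], ![![![0, 2, 0], ![0, 0, 0], ![0, 2, 0]], ![![0, 0, 0], ![0, 0, 0], ![0, 0, 0]], ![![0, 0, 0], ![0, 0, 0], ![0, 0, 0]]], ![![![0, 1, 0], ![0, 0, 0], ![0, 0, 0]], ![![0, 1, 1], ![0, 0, 0], ![0, 0, 0]], ![![0, 0, 0], ![0, 0, 0], ![0, 0, 0]]]]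

def tb5 : Fin 3 → Fin 3 → Fin 3 → Fin 3 → ℕ :=
  ![![![![0, 0, 0], ![0, 0, 0], ![0, 0, 0]], ![![0, 0, 0], ![4, 0, 3], ![0, 0, 0]], ![![0, 0, 0], ![1, 0, 0], ![0, 0, 0]]], ![![![0, 2, 0], ![0, 0, 0], ![0, 2, 0]], ![![0, 0, 0], ![0, 0, 0], ![0, 0, 0]], ![![0, 1, 0], ![0, 0, 0], ![1, 0, 0]]], ![![![0, 0, 0], ![0, 0, 0], ![0, 0, 0]], ![![0, 2, 2], ![0, 0, 0], ![0, 0, 0]], ![![0, 0, 0], ![0, 0, 0], ![0, 0, 0]]]]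

def tb6 : Fin 3 → Fin 3 → Fin 3 → Fin 3 → ℕ :=
  ![![![![0, 0, 0], ![0, 0, 0], ![0, 0, 0]], ![![0, 0, 0], ![5, 0, 2], ![0, 0, 0]], ![![0, 0, 0], ![2, 0, 0], ![0, 0, 0]]], ![![![0, 5, 0], ![0, 0, 0], ![0, 5, 0]], ![![0, 0, 0], ![0, 0, 0], ![0, 0, 0]], ![![0, 3, 0], ![0, 0, 0], ![3, 0, 0]]], ![![![0, 1, 0], ![0, 0, 0], ![0, 0, 0]], ![![0, 2, 2], ![0, 0, 0], ![0, 0, 0]], ![![0, 0, 0], ![0, 0, 0], ![0, 0, 0]]]]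

def tb7 : Fin 3 → Fin 3 → Fin 3 → Fin 3 → ℕ :=
  ![![![![0, 0, 0], ![0, 0, 0], ![0, 0, 0]], ![![0, 0, 0], ![11, 0, 6], ![0, 0, 0]], ![![0, 0, 0], ![2, 0, 0], ![0, 0, 0]]], ![![![0, 7, 0], ![0, 0, 0], ![0, 7, 0]], ![![0, 0, 0], ![0, 0, 0], ![0, 0, 0]], ![![0, 2, 0], ![0, 0, 0], ![2, 0, 0]]], ![![![0, 3, 0], ![0, 0, 0], ![0, 0, 0]], ![![0, 5, 5], ![0, 0, 0], ![0, 0, 0]], ![![0, 0, 0], ![0, 0, 0], ![0, 0, 0]]]]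

lemma Vt0 : ∀ p q : DRow, V 0 p q = tb0 (p 0) (p 1) (q 0) (q 1) := by decide

lemma Vt_step (k : ℕ) (T T' : Fin 3 → Fin 3 → Fin 3 → Fin 3 → ℕ)
    (h : ∀ p q : DRow, V k p q = T (p 0) (p 1) (q 0) (q 1))
    (h2 : ∀ q r : DRow, (∑ p : DRow, if dAllowed p q r then T (p 0) (p 1) (q 0) (q 1) else 0)
        = T' (q 0) (q 1) (r 0) (r 1)) :
    ∀ q r : DRow, V (k+1) q r = T' (q 0) (q 1) (r 0) (r 1) := by
  intro q r
  rw [V_succ, ← h2 q r]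
  refine Finset.sum_congr rfl fun p _ => ?_
  by_cases hd : dAllowed p q r <;> simp [hd, h]

lemma Vt1 : ∀ q r : DRow, V 1 q r = tb1 (q 0) (q 1) (r 0) (r 1) := Vt_step 0 tb0 tb1 Vt0 (by decide)
lemma Vt2 : ∀ q r : DRow, V 2 q r = tb2 (q 0) (q 1) (r 0) (r 1) := Vt_step 1 tb1 tb2 Vt1 (by decide)
lemma Vt3 : ∀ q r : DRow, V 3 q r = tb3 (q 0) (q 1) (r 0) (r 1) := Vt_step 2 tb2 tb3 Vt2 (by decide)
lemma Vt4 : ∀ q r : DRow, V 4 q r = tb4 (q 0) (q 1) (r 0) (r 1) := Vt_step 3 tb3 tb4 Vt3 (by decide)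
lemma Vt5 : ∀ q r : DRow, V 5 q r = tb5 (q 0) (q 1) (r 0) (r 1) := Vt_step 4 tb4 tb5 Vt4 (by decide)
lemma Vt6 : ∀ q r : DRow, V 6 q r = tb6 (q 0) (q 1) (r 0) (r 1) := Vt_step 5 tb5 tb6 Vt5 (by decide)
lemma Vt7 : ∀ q r : DRow, V 7 q r = tb7 (q 0) (q 1) (r 0) (r 1) := Vt_step 6 tb6 tb7 Vt6 (by decide)

set_option maxHeartbeats 2000000 in
lemma numkey : ∀ q r : DRow,
    tb7 (q 0) (q 1) (r 0) (r 1) + 2 * tb1 (q 0) (q 1) (r 0) (r 1)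
      = tb3 (q 0) (q 1) (r 0) (r 1) + 3 * tb4 (q 0) (q 1) (r 0) (r 1)
        + tb5 (q 0) (q 1) (r 0) (r 1) := by decide

lemma Ekey : ∀ (k : ℕ) (q r : DRow),
    V (k+7) q r + 2 * V (k+1) q r = V (k+3) q r + 3 * V (k+4) q r + V (k+5) q r := by
  intro k
  induction k with
  | zero =>
    intro q r
    simp only [Nat.zero_add]
    rw [Vt7, Vt1, Vt3, Vt4, Vt5]
    exact numkey q r
  | succ k ih =>
    intro q r
    rw [show k+1+7 = (k+7)+1 from rfl, show k+1+1 = (k+1)+1 from rfl,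
      show k+1+3 = (k+3)+1 from rfl, show k+1+4 = (k+4)+1 from rfl,
      show k+1+5 = (k+5)+1 from rfl, V_succ, V_succ, V_succ, V_succ, V_succ,
      Finset.mul_sum, Finset.mul_sum, ← Finset.sum_add_distrib,
      ← Finset.sum_add_distrib, ← Finset.sum_add_distrib]
    refine Finset.sum_congr rfl fun p _ => ?_
    by_cases hd : dAllowed p q r
    · simp only [if_pos hd, mul_ite, mul_zero]
      exact ih p q
    · simp [hd]

noncomputable def DD (k : ℕ) : ℕ := ∑ q : DRow, ∑ r : DRow, V k q r

lemma DD_rec (k : ℕ) : DD (k+7) + 2 * DD (k+1) = DD (k+3) + 3 * DD (k+4) + DD (k+5) := by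
  simp only [DD, Finset.mul_sum, ← Finset.sum_add_distrib]
  exact Finset.sum_congr rfl fun q _ => Finset.sum_congr rfl fun r _ => Ekey k q r

lemma DD_tbl (k : ℕ) (T : Fin 3 → Fin 3 → Fin 3 → Fin 3 → ℕ)
    (h : ∀ q r : DRow, V k q r = T (q 0) (q 1) (r 0) (r 1)) :
    DD k = ∑ q : DRow, ∑ r : DRow, T (q 0) (q 1) (r 0) (r 1) :=
  Finset.sum_congr rfl fun q _ => Finset.sum_congr rfl fun r _ => h q r

lemma DD0 : DD 0 = 1 := by rw [DD_tbl 0 tb0 Vt0]; decide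
lemma DD1 : DD 1 = 2 := by rw [DD_tbl 1 tb1 Vt1]; decide
lemma DD2 : DD 2 = 4 := by rw [DD_tbl 2 tb2 Vt2]; decide
lemma DD3 : DD 3 = 6 := by rw [DD_tbl 3 tb3 Vt3]; decide
lemma DD4 : DD 4 = 10 := by rw [DD_tbl 4 tb4 Vt4]; decide
lemma DD5 : DD 5 = 18 := by rw [DD_tbl 5 tb5 Vt5]; decide
lemma DD6 : DD 6 = 30 := by rw [DD_tbl 6 tb6 Vt6]; decide

lemma count_DD (k : ℕ) : dragonArrayCount (k+2) = DD k := count_eq k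

lemma d1 : dragonArrayCount 1 = 1 := by
  rw [dragonArrayCount, Nat.card_eq_fintype_card]; decide
lemma d2 : dragonArrayCount 2 = 1 := by rw [show (2:ℕ) = 0+2 from rfl, count_DD, DD0]
lemma d3 : dragonArrayCount 3 = 2 := by rw [show (3:ℕ) = 1+2 from rfl, count_DD, DD1]
lemma d4 : dragonArrayCount 4 = 4 := by rw [show (4:ℕ) = 2+2 from rfl, count_DD, DD2]
lemma d5 : dragonArrayCount 5 = 6 := by rw [show (5:ℕ) = 3+2 from rfl, count_DD, DD3]
lemma d6 : dragonArrayCount 6 = 10 := by rw [show (6:ℕ) = 4+2 from rfl, count_DD, DD4]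
lemma d7 : dragonArrayCount 7 = 18 := by rw [show (7:ℕ) = 5+2 from rfl, count_DD, DD5]
lemma d8 : dragonArrayCount 8 = 30 := by rw [show (8:ℕ) = 6+2 from rfl, count_DD, DD6]

lemma d_key (n : ℕ) :
    dragonArrayCount (n+9) + 2 * dragonArrayCount (n+3)
      = dragonArrayCount (n+5) + 3 * dragonArrayCount (n+6) + dragonArrayCount (n+7) := by
  rw [show n+9 = (n+7)+2 from rfl, show n+3 = (n+1)+2 from rfl,
    show n+5 = (n+3)+2 from rfl, show n+6 = (n+4)+2 from rfl,
    show n+7 = (n+5)+2 from rfl, count_DD, count_DD, count_DD, count_DD, count_DD]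
  exact DD_rec n

lemma d_main : ∀ n : ℕ,
    dragonArrayCount (n+4) = dragonArrayCount (n+3) + 2 * dragonArrayCount (n+1) := by
  intro n
  induction n using Nat.strong_induction_on with
  | _ n ih =>
    match n, ih with
    | 0, _ => rw [d4, d3, d1]
    | 1, _ => rw [d5, d4, d2]
    | 2, _ => rw [d6, d5, d3]
    | 3, _ => rw [d7, d6, d4]
    | 4, _ => rw [d8, d7, d5]
    | (m+5), ih =>
      have h1 := ih (m+4) (by omega)
      have h2 := ih (m+3) (by omega)
      have h3 := ih (m+2) (by omega)
      have hk := d_key m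
      have e1 : m+4+4 = m+8 := by omega
      have e2 : m+4+3 = m+7 := by omega
      have e3 : m+4+1 = m+5 := by omega
      have e4 : m+3+4 = m+7 := by omega
      have e5 : m+3+3 = m+6 := by omega
      have e6 : m+3+1 = m+4 := by omega
      have e7 : m+2+4 = m+6 := by omega
      have e8 : m+2+3 = m+5 := by omega
      have e9 : m+2+1 = m+3 := by omega
      rw [e1, e2, e3] at h1
      rw [e4, e5, e6] at h2
      rw [e7, e8, e9] at h3
      have egoal1 : m+5+4 = m+9 := by omega
      have egoal2 : m+5+3 = m+8 := by omega
      have egoal3 : m+5+1 = m+6 := by omega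
      rw [egoal1, egoal2, egoal3]
      omega

theorem stmt_14 :
    dragonArrayCount 1 = 1 ∧ dragonArrayCount 2 = 1 ∧ dragonArrayCount 3 = 2 ∧
    ∀ n, 4 ≤ n →
      dragonArrayCount n = dragonArrayCount (n-1) + 2 * dragonArrayCount (n-3) := by
  refine ⟨d1, d2, d3, fun n hn => ?_⟩
  obtain ⟨m, rfl⟩ : ∃ m, n = m + 4 := ⟨n - 4, by omega⟩
  rw [show m+4-1 = m+3 from rfl, show m+4-3 = m+1 from rfl]
  exact d_main m
end
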